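/- Let K be a field of characteristic zero, z ∈ K nonzero, u_0, …, u_{m′−1} ∈ K, and x_0, …, x_{m′−1} ∈ ℚ. For u ∈ K and x ∈ ℚ define F(u, x, z) := ∏_{a ∈ ℚ, x < a ≤ 0, a − x ∈ ℤ} (u + a z) if x ≤ 0, and F(u, x, z) := (∏_{a ∈ ℚ, 0 < a ≤ x, a − x ∈ ℤ} (u + a z))^{−1} if x > 0 (assuming all factors inverted are nonzero). Then ∏_{i=0}^{m′−1} F(u_i, x_i, z) = z^{−k} · ∏_{i=0}^{m′−1} F(u_i z^{−1}, x_i, 1), where k := Σ_{i=0}^{m′−1} ⌈x_i⌉ = Σ_{i=0}^{m′−1} x_i + Σ_{i=0}^{m′−1} ⟨−x_i⟩ ∈ ℤ. -/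

import Mathlib

/-- The factor `F(u, x, z)` of the hypergeometric modification: for `x ≤ 0` it is the product
`∏_{x < a ≤ 0, a - x ∈ ℤ} (u + a z)`, and for `x > 0` it is `(∏_{0 < a ≤ x, a - x ∈ ℤ} (u + a z))⁻¹`. -/
noncomputable def hypFactor {K : Type*} [Field K] [CharZero K] (u : K) (x : ℚ) (z : K) : K :=
  if 0 < x then
    (∏ᶠ a ∈ {a : ℚ | 0 < a ∧ a ≤ x ∧ ∃ n : ℤ, a - x = n}, (u + (a : K) * z))⁻¹
  else
    ∏ᶠ a ∈ {a : ℚ | x < a ∧ a ≤ 0 ∧ ∃ n : ℤ, a - x = n}, (u + (a : K) * z)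

lemma castInj (x : ℚ) : Function.Injective (fun n : ℤ => x + (n : ℚ)) := by
  intro a b h
  simpa using h

lemma hypSet_neg (x : ℚ) :
    {a : ℚ | x < a ∧ a ≤ 0 ∧ ∃ n : ℤ, a - x = n} =
      ↑((Finset.Icc (1:ℤ) (-⌈x⌉)).image (fun n : ℤ => x + (n:ℚ))) := by
  ext a
  simp only [Finset.coe_image, Set.mem_image, Finset.mem_coe, Finset.mem_Icc, Set.mem_setOf_eq]
  constructor
  · rintro ⟨h1, h2, n, hn⟩
    have hn' : a = x + (n:ℚ) := by linarith
    have h0 : (0:ℚ) < n := by linarith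
    have h0' : (1:ℤ) ≤ n := by exact_mod_cast h0
    have h2' : x ≤ ((-n : ℤ) : ℚ) := by push_cast; linarith
    have := Int.ceil_le.mpr h2'
    exact ⟨n, ⟨h0', by omega⟩, hn'.symm⟩
  · rintro ⟨n, ⟨h1, h2⟩, rfl⟩
    have h1' : (1:ℚ) ≤ (n:ℚ) := by exact_mod_cast h1
    have h2' : (⌈x⌉ : ℤ) ≤ -n := by omega
    have := Int.ceil_le.mp h2'
    push_cast at this
    exact ⟨by linarith, by linarith, n, by ring⟩

lemma hypSet_pos (x : ℚ) :
    {a : ℚ | 0 < a ∧ a ≤ x ∧ ∃ n : ℤ, a - x = n} =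
      ↑((Finset.Icc (1 - ⌈x⌉) (0:ℤ)).image (fun n : ℤ => x + (n:ℚ))) := by
  ext a
  simp only [Finset.coe_image, Set.mem_image, Finset.mem_coe, Finset.mem_Icc, Set.mem_setOf_eq]
  constructor
  · rintro ⟨h1, h2, n, hn⟩
    have hn' : a = x + (n:ℚ) := by linarith
    have hle : (n:ℚ) ≤ 0 := by linarith
    have hle' : n ≤ 0 := by exact_mod_cast hle
    have hlt : ((-n : ℤ) : ℚ) < x := by push_cast; linarith
    have := Int.lt_ceil.mpr hlt
    exact ⟨n, ⟨by omega, hle'⟩, hn'.symm⟩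
  · rintro ⟨n, ⟨h1, h2⟩, rfl⟩
    have h2' : (n:ℚ) ≤ 0 := by exact_mod_cast h2
    have h1' : -n < ⌈x⌉ := by omega
    have := Int.lt_ceil.mp h1'
    push_cast at this
    exact ⟨by linarith, by linarith, n, by ring⟩

lemma hyp_key {K : Type*} [Field K] [CharZero K] (u : K) (x : ℚ) (z : K) (hz : z ≠ 0) :
    hypFactor u x z = z ^ (-⌈x⌉) * hypFactor (u * z⁻¹) x 1 := by
  have hfac : ∀ a : ℚ, u + (a : K) * z = z * (u * z⁻¹ + (a : K) * 1) := by
    intro a; field_simp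
  unfold hypFactor
  split_ifs with h
  · rw [hypSet_pos, finprod_mem_coe_finset, finprod_mem_coe_finset,
      Finset.prod_image (fun a _ b _ hab => castInj x hab),
      Finset.prod_image (fun a _ b _ hab => castInj x hab)]
    simp only [hfac]
    rw [Finset.prod_mul_distrib, Finset.prod_const, mul_inv]
    have hcard : (Finset.Icc (1 - ⌈x⌉) (0:ℤ)).card = ⌈x⌉.toNat := by
      rw [Int.card_Icc]; omega
    rw [hcard]
    have hc : 0 < ⌈x⌉ := Int.lt_ceil.mpr (by exact_mod_cast h)
    have hzz : z ^ (-⌈x⌉) = (z ^ ⌈x⌉.toNat)⁻¹ := by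
      rw [← zpow_natCast, ← zpow_neg]
      congr 1
      omega
    rw [hzz]
  · rw [hypSet_neg, finprod_mem_coe_finset, finprod_mem_coe_finset,
      Finset.prod_image (fun a _ b _ hab => castInj x hab),
      Finset.prod_image (fun a _ b _ hab => castInj x hab)]
    simp only [hfac]
    rw [Finset.prod_mul_distrib, Finset.prod_const]
    have hcard : (Finset.Icc (1:ℤ) (-⌈x⌉)).card = (-⌈x⌉).toNat := by
      rw [Int.card_Icc]; omega
    rw [hcard]
    have hc : ⌈x⌉ ≤ 0 := Int.ceil_le.mpr (by exact_mod_cast le_of_not_gt h)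
    have hzz : z ^ (-⌈x⌉) = z ^ (-⌈x⌉).toNat := by
      rw [← zpow_natCast]
      congr 1
      omega
    rw [hzz]

/-- For a field `K` of characteristic zero, `z ≠ 0`, `uᵢ ∈ K`, `xᵢ ∈ ℚ`
(with the inverted factors nonzero), one has
`∏ᵢ F(uᵢ, xᵢ, z) = z^{-k} ∏ᵢ F(uᵢ z⁻¹, xᵢ, 1)` where
`k = ∑ᵢ ⌈xᵢ⌉ = ∑ᵢ xᵢ + ∑ᵢ ⟨-xᵢ⟩ ∈ ℤ`. -/
theorem stmt3 (K : Type*) [Field K] [CharZero K] (z : K) (hz : z ≠ 0)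
    (m' : ℕ) (u : Fin m' → K) (x : Fin m' → ℚ)
    (hne : ∀ i, 0 < x i →
      ∀ a : ℚ, (0 < a ∧ a ≤ x i ∧ ∃ n : ℤ, a - x i = n) → u i + (a : K) * z ≠ 0) :
    (∏ i, hypFactor (u i) (x i) z) =
      z ^ (-(∑ i, ⌈x i⌉)) * ∏ i, hypFactor (u i * z⁻¹) (x i) 1 ∧
    ((∑ i, ⌈x i⌉ : ℤ) : ℚ) = (∑ i, x i) + ∑ i, Int.fract (-(x i)) := by
  constructor
  · calc (∏ i, hypFactor (u i) (x i) z)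
        = ∏ i, z ^ (-⌈x i⌉) * hypFactor (u i * z⁻¹) (x i) 1 := by
          exact Finset.prod_congr rfl fun i _ => hyp_key (u i) (x i) z hz
      _ = (∏ i, z ^ (-⌈x i⌉)) * ∏ i, hypFactor (u i * z⁻¹) (x i) 1 :=
          Finset.prod_mul_distrib
      _ = z ^ (-(∑ i, ⌈x i⌉)) * ∏ i, hypFactor (u i * z⁻¹) (x i) 1 := by
          congr 1
          have key : ∀ s : Finset (Fin m'), ∏ i ∈ s, z ^ (-⌈x i⌉) = z ^ (-∑ i ∈ s, ⌈x i⌉) := by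
            intro s
            induction s using Finset.induction with
            | empty => simp
            | insert _ _ h ih =>
              rw [Finset.prod_insert h, Finset.sum_insert h, ih, neg_add, zpow_add₀ hz]
          exact key Finset.univ
  · rw [← Finset.sum_add_distrib]
    push_cast
    refine Finset.sum_congr rfl fun i _ => ?_
    rw [Int.fract, Int.floor_neg]
    push_cast
    ring
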